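/- arXiv:2511.18750 — 2 statements merged into one kernel-verified Lean document; each statement's English description precedes it below -/
import Mathlib

section
/- Consider a K-armed bandit where all arms have the same reward distribution, run with a symmetric algorithm so that the arm-pull counts n_{1,T}, …, n_{K,T} are exchangeable (identically distributed) and sum to T. If the algorithm is stable, i.e., there exist deterministic sequences n*_{a,T} → ∞ with n_{a,T}/n*_{a,T} → 1 in probability for each arm a, then necessarily n*_{a,T}/(T/K) → 1 for every arm a. -/
open MeasureTheory ProbabilityTheory Filter

/-- In a `K`-armed bandit with identical arms run by a symmetric algorithm (so the
pull counts are identically distributed and sum to `T`), stability — existence of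
deterministic `n*_{a,T} → ∞` with `n_{a,T}/n*_{a,T} → 1` in probability — forces
`n*_{a,T}/(T/K) → 1` for every arm `a`. -/
theorem stmt14 {Ω : Type*} [MeasurableSpace Ω] (P : Measure Ω) [IsProbabilityMeasure P]
    (K : ℕ) (hK : 0 < K)
    (N : ℕ → Fin K → Ω → ℕ) (hmeas : ∀ T a, Measurable (N T a))
    (hexch : ∀ (T : ℕ) (a : Fin K), Measure.map (N T a) P = Measure.map (N T ⟨0, hK⟩) P)
    (hsum : ∀ (T : ℕ) (ω : Ω), ∑ a : Fin K, N T a ω = T)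
    (nstar : ℕ → Fin K → ℝ)
    (hstar_inf : ∀ a : Fin K, Tendsto (fun T => nstar T a) atTop atTop)
    (hstab : ∀ (a : Fin K) (ε : ℝ), 0 < ε →
      Tendsto (fun T => P {ω | ε ≤ |(N T a ω : ℝ) / nstar T a - 1|})
        atTop (nhds 0)) :
    ∀ a : Fin K, Tendsto (fun T => nstar T a / ((T : ℝ) / K)) atTop (nhds 1) := by
  intro a
  have hK' : (0:ℝ) < K := Nat.cast_pos.mpr hK
  -- transfer of laws: all arms have the same deviation probability
  have hlaw : ∀ (T : ℕ) (b : Fin K) (ε s : ℝ),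
      P {ω | ε ≤ |(N T b ω : ℝ) / s - 1|} = P {ω | ε ≤ |(N T a ω : ℝ) / s - 1|} := by
    intro T b ε s
    have h1 : {ω | ε ≤ |(N T b ω : ℝ) / s - 1|}
        = N T b ⁻¹' {n : ℕ | ε ≤ |(n : ℝ) / s - 1|} := rfl
    have h2 : {ω | ε ≤ |(N T a ω : ℝ) / s - 1|}
        = N T a ⁻¹' {n : ℕ | ε ≤ |(n : ℝ) / s - 1|} := rfl
    rw [h1, h2, ← Measure.map_apply (hmeas T b) (MeasurableSet.of_discrete),
        ← Measure.map_apply (hmeas T a) (MeasurableSet.of_discrete),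
        hexch T b, hexch T a]
  have key : Tendsto (fun T : ℕ => (T : ℝ) / (K * nstar T a)) atTop (nhds 1) := by
    rw [Metric.tendsto_nhds]
    intro ε hε
    have hsmall : ∀ᶠ T in atTop,
        P {ω | ε ≤ |(N T a ω : ℝ) / nstar T a - 1|} < (K : ENNReal)⁻¹ := by
      refine (hstab a ε hε).eventually (gt_mem_nhds ?_)
      simp [ENNReal.inv_pos]
    have hpos : ∀ᶠ T in atTop, (1:ℝ) ≤ nstar T a := (hstar_inf a).eventually_ge_atTop 1
    filter_upwards [hsmall, hpos] with T hT hs1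
    set s := nstar T a with hsdef
    have hs0 : (0:ℝ) < s := lt_of_lt_of_le one_pos hs1
    -- find ω avoiding all bad events
    have hexω : ∃ ω, ∀ b : Fin K, |(N T b ω : ℝ) / s - 1| < ε := by
      by_contra hcon
      push_neg at hcon
      have hcover : (Set.univ : Set Ω) ⊆ ⋃ b : Fin K, {ω | ε ≤ |(N T b ω : ℝ) / s - 1|} := by
        intro ω _
        obtain ⟨b, hb⟩ := hcon ω
        exact Set.mem_iUnion.2 ⟨b, hb⟩
      have hle : (1 : ENNReal) ≤ ∑ b : Fin K, P {ω | ε ≤ |(N T b ω : ℝ) / s - 1|} := by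
        calc (1:ENNReal) = P Set.univ := measure_univ.symm
        _ ≤ P (⋃ b : Fin K, {ω | ε ≤ |(N T b ω : ℝ) / s - 1|}) := measure_mono hcover
        _ ≤ ∑ b : Fin K, P {ω | ε ≤ |(N T b ω : ℝ) / s - 1|} := measure_iUnion_fintype_le _ _
      have heq : ∑ b : Fin K, P {ω | ε ≤ |(N T b ω : ℝ) / s - 1|}
          = (K : ENNReal) * P {ω | ε ≤ |(N T a ω : ℝ) / s - 1|} := by
        rw [Finset.sum_congr rfl fun b _ => hlaw T b ε s]
        simp [mul_comm]
      have hKne : (K : ENNReal) ≠ 0 := by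
        simp [hK.ne']
      have hKnetop : (K : ENNReal) ≠ ⊤ := ENNReal.natCast_ne_top K
      have hlt : (K : ENNReal) * P {ω | ε ≤ |(N T a ω : ℝ) / s - 1|} < 1 := by
        calc (K : ENNReal) * P {ω | ε ≤ |(N T a ω : ℝ) / s - 1|}
            < (K : ENNReal) * (K : ENNReal)⁻¹ :=
              (ENNReal.mul_lt_mul_iff_right hKne hKnetop).2 hT
        _ = 1 := ENNReal.mul_inv_cancel hKne hKnetop
      rw [heq] at hle
      exact absurd hle (not_le.2 hlt)
    obtain ⟨ω, hω⟩ := hexω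
    -- sum up the bounds
    have hsumcast : ∑ b : Fin K, ((N T b ω : ℝ) / s) = (T : ℝ) / s := by
      rw [← Finset.sum_div]
      congr 1
      exact_mod_cast congrArg (Nat.cast : ℕ → ℝ) (hsum T ω)
    have hsum_bound : |(T : ℝ) / s - K| < K * ε := by
      have h1 : (T : ℝ) / s - K = ∑ b : Fin K, ((N T b ω : ℝ) / s - 1) := by
        rw [Finset.sum_sub_distrib, hsumcast]
        simp
      rw [h1]
      calc |∑ b : Fin K, ((N T b ω : ℝ) / s - 1)|
          ≤ ∑ b : Fin K, |(N T b ω : ℝ) / s - 1| := Finset.abs_sum_le_sum_abs _ _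
        _ < ∑ _b : Fin K, ε := by
            refine Finset.sum_lt_sum_of_nonempty ?_ fun b _ => hω b
            exact Finset.univ_nonempty_iff.2 ⟨⟨0, hK⟩⟩
        _ = K * ε := by simp [mul_comm]
    have hKs : (0:ℝ) < (K : ℝ) * s := mul_pos hK' hs0
    rw [Real.dist_eq]
    have : (T : ℝ) / ((K : ℝ) * s) - 1 = ((T : ℝ) / s - K) / K := by
      field_simp
    rw [this, abs_div, abs_of_pos hK']
    rw [div_lt_iff₀ hK']
    calc |(T : ℝ) / s - K| < K * ε := hsum_bound
      _ = ε * K := mul_comm _ _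
  -- conclude
  have hcongr : (fun T : ℕ => ((T : ℝ) / (K * nstar T a))⁻¹)
      =ᶠ[atTop] (fun T : ℕ => nstar T a / ((T : ℝ) / K)) := by
    have hpos : ∀ᶠ T in atTop, (1:ℝ) ≤ nstar T a := (hstar_inf a).eventually_ge_atTop 1
    have hT1 : ∀ᶠ T : ℕ in atTop, 1 ≤ T := eventually_ge_atTop 1
    filter_upwards [hpos, hT1] with T hs1 hT1
    have hs0 : (0:ℝ) < nstar T a := lt_of_lt_of_le one_pos hs1
    have hT0 : (0:ℝ) < (T:ℝ) := by exact_mod_cast hT1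
    field_simp
  have := (key.inv₀ one_ne_zero)
  rw [inv_one] at this
  exact this.congr' hcongr
end

section
/- Let (Y_T) and (Z_T) be sequences of positive random variables, and let (a_T), (b_T) be positive deterministic sequences. If Y_T/a_T → 1 in probability, Z_T/b_T → 1 in probability, and Y_T has the same distribution as Z_T for each T, then a_T/b_T → 1. -/
open MeasureTheory ProbabilityTheory Filter

/-- If `Y_T/a_T → 1` and `Z_T/b_T → 1` in probability for positive random variables
`Y_T, Z_T` and positive deterministic sequences `a_T, b_T`, and `Y_T` has the same
distribution as `Z_T` for each `T`, then `a_T/b_T → 1`. -/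
theorem stmt15 {Ω : Type*} [MeasurableSpace Ω] (P : Measure Ω) [IsProbabilityMeasure P]
    (Y Z : ℕ → Ω → ℝ) (hYmeas : ∀ T, Measurable (Y T)) (hZmeas : ∀ T, Measurable (Z T))
    (hYpos : ∀ T ω, 0 < Y T ω) (hZpos : ∀ T ω, 0 < Z T ω)
    (a b : ℕ → ℝ) (ha : ∀ T, 0 < a T) (hb : ∀ T, 0 < b T)
    (hYa : ∀ ε : ℝ, 0 < ε →
      Tendsto (fun T => P {ω | ε ≤ |Y T ω / a T - 1|}) atTop (nhds 0))
    (hZb : ∀ ε : ℝ, 0 < ε →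
      Tendsto (fun T => P {ω | ε ≤ |Z T ω / b T - 1|}) atTop (nhds 0))
    (hident : ∀ T, Measure.map (Y T) P = Measure.map (Z T) P) :
    Tendsto (fun T => a T / b T) atTop (nhds 1) := by
  rw [Metric.tendsto_nhds]
  intro δ hδ
  set ε : ℝ := min (δ / 5) (1 / 2) with hεdef
  have hε0 : 0 < ε := lt_min (by linarith) (by norm_num)
  have hεδ : ε ≤ δ / 5 := min_le_left _ _
  have hεh : ε ≤ 1 / 2 := min_le_right _ _
  have h1 : ∀ᶠ T in atTop, P {ω | ε ≤ |Y T ω / a T - 1|} < 1 / 2 :=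
    (hYa ε hε0).eventually_lt_const (by norm_num)
  have h2 : ∀ᶠ T in atTop, P {ω | ε ≤ |Z T ω / b T - 1|} < 1 / 2 :=
    (hZb ε hε0).eventually_lt_const (by norm_num)
  filter_upwards [h1, h2] with T hT1 hT2
  have haT := ha T
  have hbT := hb T
  -- identify the law of Z_T scaled by a_T with that of Y_T
  have hS : MeasurableSet {x : ℝ | ε ≤ |x / a T - 1|} :=
    measurableSet_le measurable_const (((measurable_id.div_const _).sub_const 1).abs)
  have hmap : P {ω | ε ≤ |Z T ω / a T - 1|} = P {ω | ε ≤ |Y T ω / a T - 1|} := by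
    calc P {ω | ε ≤ |Z T ω / a T - 1|}
        = (Measure.map (Z T) P) {x : ℝ | ε ≤ |x / a T - 1|} :=
          (Measure.map_apply (hZmeas T) hS).symm
      _ = (Measure.map (Y T) P) {x : ℝ | ε ≤ |x / a T - 1|} := by rw [hident]
      _ = P {ω | ε ≤ |Y T ω / a T - 1|} := Measure.map_apply (hYmeas T) hS
  -- find a point in the intersection of the two good events
  have hcap : ∃ ω, ¬ ε ≤ |Z T ω / a T - 1| ∧ ¬ ε ≤ |Z T ω / b T - 1| := by
    by_contra h
    push_neg at h
    have hun : {ω | ε ≤ |Z T ω / a T - 1|} ∪ {ω | ε ≤ |Z T ω / b T - 1|} = Set.univ := by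
      ext ω
      simp only [Set.mem_union, Set.mem_setOf_eq, Set.mem_univ, iff_true]
      by_cases hc : ε ≤ |Z T ω / a T - 1|
      · exact Or.inl hc
      · exact Or.inr (h ω (not_le.mp hc))
    have hle := measure_union_le (μ := P)
      {ω | ε ≤ |Z T ω / a T - 1|} {ω | ε ≤ |Z T ω / b T - 1|}
    rw [hun, measure_univ, hmap] at hle
    have hlt : P {ω | ε ≤ |Y T ω / a T - 1|} + P {ω | ε ≤ |Z T ω / b T - 1|}
        < 1 / 2 + 1 / 2 := ENNReal.add_lt_add hT1 hT2
    rw [ENNReal.add_halves] at hlt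
    exact absurd (lt_of_le_of_lt hle hlt) (lt_irrefl 1)
  obtain ⟨ω, hωa, hωb⟩ := hcap
  rw [not_le, abs_lt] at hωa hωb
  obtain ⟨ha1, ha2⟩ := hωa
  obtain ⟨hb1, hb2⟩ := hωb
  set z := Z T ω with hzdef
  have hz1 : z < (1 + ε) * a T := (div_lt_iff₀ haT).mp (by linarith)
  have hz2 : (1 - ε) * a T < z := (lt_div_iff₀ haT).mp (by linarith)
  have hz3 : z < (1 + ε) * b T := (div_lt_iff₀ hbT).mp (by linarith)
  have hz4 : (1 - ε) * b T < z := (lt_div_iff₀ hbT).mp (by linarith)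
  have h1ε : (0 : ℝ) < 1 - ε := by linarith
  have h1ε' : (0 : ℝ) < 1 + ε := by linarith
  -- upper bound : a T < (1 + δ) * b T
  have key1 : (1 - ε) * a T < (1 + ε) * b T := lt_trans hz2 hz3
  have e1 : b T * ε ≤ b T * (δ / 5) := mul_le_mul_of_nonneg_left hεδ hbT.le
  have e2 : δ * ε ≤ δ * (1 / 2) := mul_le_mul_of_nonneg_left hεh hδ.le
  have e3 : b T * (δ * ε) ≤ b T * (δ * (1 / 2)) := mul_le_mul_of_nonneg_left e2 hbT.le
  have hfac1 : (1 + ε) * b T ≤ ((1 + δ) * b T) * (1 - ε) := by nlinarith [hbT, hε0, hδ]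
  have hup : a T < (1 + δ) * b T := by
    have h' : a T * (1 - ε) < ((1 + δ) * b T) * (1 - ε) := by
      calc a T * (1 - ε) = (1 - ε) * a T := mul_comm _ _
        _ < (1 + ε) * b T := key1
        _ ≤ ((1 + δ) * b T) * (1 - ε) := hfac1
    exact (mul_lt_mul_iff_of_pos_right h1ε).mp h'
  -- lower bound : (1 - δ) * b T < a T
  have key2 : (1 - ε) * b T < (1 + ε) * a T := lt_trans hz4 hz1
  have hfac2 : ((1 - δ) * b T) * (1 + ε) ≤ (1 - ε) * b T := by nlinarith [hbT, hε0, hδ, e1, e3]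
  have hlow : (1 - δ) * b T < a T := by
    have h' : ((1 - δ) * b T) * (1 + ε) < a T * (1 + ε) := by
      calc ((1 - δ) * b T) * (1 + ε) ≤ (1 - ε) * b T := hfac2
        _ < (1 + ε) * a T := key2
        _ = a T * (1 + ε) := mul_comm _ _
    exact (mul_lt_mul_iff_of_pos_right h1ε').mp h'
  rw [Real.dist_eq, abs_lt]
  constructor
  · have : 1 - δ < a T / b T := (lt_div_iff₀ hbT).mpr hlow
    linarith
  · have : a T / b T < 1 + δ := (div_lt_iff₀ hbT).mpr hup
    linarith
end
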